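/- Let ω^{ij} be a smooth antisymmetric bivector, Γ^i_{jk} smooth Christoffel symbols, and g_{ij} a smooth symmetric metric on an open set U ⊆ ℝⁿ. Assume: (a) the pair (ω, ∇) is Poisson-compatible; (b) ∇ is metric-compatible, i.e. ∂_p g_{ij} = Γ^a_{pi} g_{aj} + Γ^a_{pj} g_{ia} for all i, j, p; and (c) the lowered torsion T_{ijk} := g_{ia} T^a_{jk} is totally antisymmetric (T_{ijk} = −T_{jik}). Then the generalised Ricci 2-form ℛ := g_{ij} H^{ij}, with coefficients ℛ_{mn} = g_{ij} H^{ij}_{mn} where H^{ij}_{mn} := (1/2) ω^{is}[(T^j_{nm;s} − 2 R^j_{nms}) − (T^j_{mn;s} − 2 R^j_{mns})], is closed: Σ_{cyclic (p,m,n)} ∂_p ℛ_{mn} = 0 for all p, m, n. -/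

import Mathlib

namespace Stmt14

variable {n : ℕ}

/-- Partial derivative in the `i`-th coordinate direction. -/
noncomputable def pd (i : Fin n) (f : (Fin n → ℝ) → ℝ) (x : Fin n → ℝ) : ℝ :=
  fderiv ℝ f x (Pi.single i 1)

/-- Torsion `T^i_{jk} = Γ^i_{jk} - Γ^i_{kj}`. -/
def Tor (Γ : Fin n → Fin n → Fin n → (Fin n → ℝ) → ℝ) (i j k : Fin n)
    (x : Fin n → ℝ) : ℝ :=
  Γ i j k x - Γ i k j x

/-- Curvature `R^l_{ijk} = ∂_j Γ^l_{ki} − ∂_k Γ^l_{ji} + Γ^m_{ki} Γ^l_{jm} − Γ^m_{ji} Γ^l_{km}`. -/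
noncomputable def Rc (Γ : Fin n → Fin n → Fin n → (Fin n → ℝ) → ℝ) (l i j k : Fin n)
    (x : Fin n → ℝ) : ℝ :=
  pd j (Γ l k i) x - pd k (Γ l j i) x
    + ∑ m, Γ m k i x * Γ l j m x - ∑ m, Γ m j i x * Γ l k m x

/-- Covariant derivative of the torsion:
`T^j_{ab;s} = ∂_s T^j_{ab} + Γ^j_{sp} T^p_{ab} − Γ^p_{sa} T^j_{pb} − Γ^p_{sb} T^j_{ap}`. -/
noncomputable def covT (Γ : Fin n → Fin n → Fin n → (Fin n → ℝ) → ℝ) (j a b s : Fin n)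
    (x : Fin n → ℝ) : ℝ :=
  pd s (Tor Γ j a b) x + ∑ p, Γ j s p x * Tor Γ p a b x
    - ∑ p, Γ p s a x * Tor Γ j p b x - ∑ p, Γ p s b x * Tor Γ j a p x

/-- The pair `(ω, ∇)` is Poisson-compatible on `U`:
`∂_m ω^{ij} + ω^{kj} Γ^i_{km} + ω^{ik} Γ^j_{km} = 0`. -/
def PoissonCompat (U : Set (Fin n → ℝ)) (ω : Fin n → Fin n → (Fin n → ℝ) → ℝ)
    (Γ : Fin n → Fin n → Fin n → (Fin n → ℝ) → ℝ) : Prop :=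
  ∀ i j m, ∀ x ∈ U,
    pd m (ω i j) x + ∑ k, ω k j x * Γ i k m x + ∑ k, ω i k x * Γ j k m x = 0

/-- Coefficients of the 2-form `H^{ij}`:
`H^{ij}_{mn} = (1/2) ω^{is}[(T^j_{nm;s} − 2R^j_{nms}) − (T^j_{mn;s} − 2R^j_{mns})]`. -/
noncomputable def Hc (ω : Fin n → Fin n → (Fin n → ℝ) → ℝ)
    (Γ : Fin n → Fin n → Fin n → (Fin n → ℝ) → ℝ) (i j m m' : Fin n)
    (x : Fin n → ℝ) : ℝ :=
  (1 / 2 : ℝ) * ∑ s, ω i s x *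
    ((covT Γ j m' m s x - 2 * Rc Γ j m' m s x)
      - (covT Γ j m m' s x - 2 * Rc Γ j m m' s x))

/-- Coefficients of the generalised Ricci 2-form `ℛ_{mn} = g_{ij} H^{ij}_{mn}`. -/
noncomputable def Ric (g ω : Fin n → Fin n → (Fin n → ℝ) → ℝ)
    (Γ : Fin n → Fin n → Fin n → (Fin n → ℝ) → ℝ) (m m' : Fin n) :
    (Fin n → ℝ) → ℝ :=
  fun x => ∑ i, ∑ j, g i j x * Hc ω Γ i j m m' x

/-! ### Auxiliary definitions -/

/-- `ω̂ : Ω^b_a = ∑_c ω^{bc} g_{ac}` -/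
noncomputable def Wf (g ω : Fin n → Fin n → (Fin n → ℝ) → ℝ) (b a : Fin n) :
    (Fin n → ℝ) → ℝ :=
  fun x => ∑ c, ω b c x * g a c x

/-- Curvature 2-form of the "direction-last" connection `(Γ̃_m)^a_b = Γ^a_{bm}`. -/
noncomputable def Ff (Γ : Fin n → Fin n → Fin n → (Fin n → ℝ) → ℝ) (a b m m' : Fin n) :
    (Fin n → ℝ) → ℝ :=
  fun x => pd m (Γ a b m') x - pd m' (Γ a b m) x
    + ∑ c, (Γ a c m x * Γ c b m' x - Γ a c m' x * Γ c b m x)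

/-! ### pd calculus -/

section pdcalc
variable {U : Set (Fin n → ℝ)} {f g : (Fin n → ℝ) → ℝ} {x : Fin n → ℝ} {i : Fin n}

theorem pd_congr {g : (Fin n → ℝ) → ℝ} (h : f =ᶠ[nhds x] g) : pd i f x = pd i g x := by
  unfold pd; rw [h.fderiv_eq]

theorem pd_add (hf : DifferentiableAt ℝ f x) (hg : DifferentiableAt ℝ g x) :
    pd i (fun y => f y + g y) x = pd i f x + pd i g x := by
  unfold pd; rw [fderiv_fun_add hf hg]; rfl

theorem pd_sub (hf : DifferentiableAt ℝ f x) (hg : DifferentiableAt ℝ g x) :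
    pd i (fun y => f y - g y) x = pd i f x - pd i g x := by
  unfold pd; rw [fderiv_fun_sub hf hg]; rfl

theorem pd_mul (hf : DifferentiableAt ℝ f x) (hg : DifferentiableAt ℝ g x) :
    pd i (fun y => f y * g y) x = f x * pd i g x + g x * pd i f x := by
  unfold pd; rw [fderiv_fun_mul hf hg]; rfl

theorem pd_sum {m : ℕ} {A : Fin m → (Fin n → ℝ) → ℝ} (h : ∀ j, DifferentiableAt ℝ (A j) x) :
    pd i (fun y => ∑ j, A j y) x = ∑ j, pd i (A j) x := by
  unfold pd; rw [fderiv_fun_sum (fun j _ => h j)]; simp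

theorem diffAt (hU : IsOpen U) (hf : ContDiffOn ℝ (⊤ : ℕ∞) f U) (hx : x ∈ U) :
    DifferentiableAt ℝ f x :=
  (hf.contDiffAt (hU.mem_nhds hx)).differentiableAt (by simp)

theorem contDiffOn_pd (hU : IsOpen U) (hf : ContDiffOn ℝ (⊤ : ℕ∞) f U) :
    ContDiffOn ℝ (⊤ : ℕ∞) (pd i f) U :=
  (hf.fderiv_of_isOpen hU (by simp)).clm_apply contDiffOn_const

theorem pd_comm (hU : IsOpen U) (hf : ContDiffOn ℝ (⊤ : ℕ∞) f U) (hx : x ∈ U) {p m : Fin n} :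
    pd p (pd m f) x = pd m (pd p f) x := by
  have hat : ContDiffAt ℝ (⊤ : ℕ∞) f x := hf.contDiffAt (hU.mem_nhds hx)
  have hsym := hat.isSymmSndFDerivAt (by rw [minSmoothness_of_isRCLikeNormedField]; exact WithTop.coe_le_coe.mpr le_top)
  have hd : DifferentiableAt ℝ (fderiv ℝ f) x :=
    (hat.fderiv_right (m := 1) (by exact WithTop.coe_le_coe.mpr le_top)).differentiableAt one_ne_zero
  have key : ∀ q r : Fin n, pd q (pd r f) x
      = fderiv ℝ (fderiv ℝ f) x (Pi.single q 1) (Pi.single r 1) := by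
    intro q r
    unfold pd
    rw [fderiv_clm_apply hd (differentiableAt_const _)]
    simp
  rw [key, key, hsym]

end pdcalc

/-! ### Matrix algebra lemmas -/

theorem trace_ab (M N : Matrix (Fin n) (Fin n) ℝ) :
    ∑ a, ∑ b, M b a * N a b = Matrix.trace (M * N) := by
  simp only [Matrix.trace, Matrix.diag, Matrix.mul_apply]
  exact Finset.sum_comm

theorem comm_trace (W Q F : Matrix (Fin n) (Fin n) ℝ) :
    Matrix.trace ((W * Q - Q * W) * F) = Matrix.trace (W * (Q * F - F * Q)) := by
  simp only [Matrix.sub_mul, Matrix.mul_sub, Matrix.trace_sub, ← Matrix.mul_assoc]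
  rw [Matrix.trace_mul_cycle W F Q]

theorem bianchi (P M N Apm Apn Amn Anm Anp Amp Cpmn Cpnm Cmnp Cmpn Cnpm Cnmp :
    Matrix (Fin n) (Fin n) ℝ)
    (h1 : Cpmn = Cmpn) (h2 : Cpnm = Cnpm) (h3 : Cmnp = Cnmp) :
    (Cpmn - Cpnm + Apm * N + M * Apn - Apn * M - N * Apm)
    + (Cmnp - Cmpn + Amn * P + N * Amp - Amp * N - P * Amn)
    + (Cnpm - Cnmp + Anp * M + P * Anm - Anm * P - M * Anp)
    = - (P * (Amn - Anm + M * N - N * M) - (Amn - Anm + M * N - N * M) * P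
        + (M * (Anp - Apn + N * P - P * N) - (Anp - Apn + N * P - P * N) * M)
        + (N * (Apm - Amp + P * M - M * P) - (Apm - Amp + P * M - M * P) * N)) := by
  subst h1 h2 h3
  noncomm_ring

/-! ### Main lemmas -/

section main
variable {U : Set (Fin n → ℝ)}
variable (ω g : Fin n → Fin n → (Fin n → ℝ) → ℝ)
variable (Γ : Fin n → Fin n → Fin n → (Fin n → ℝ) → ℝ)

theorem CT (hU : IsOpen U) (hΓs : ∀ i j k, ContDiffOn ℝ (⊤ : ℕ∞) (Γ i j k) U)
    {x : Fin n → ℝ} (hx : x ∈ U) (j a b s : Fin n) :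
    covT Γ j a b s x - 2 * Rc Γ j a b s x
      = pd s (Γ j a b) x + pd s (Γ j b a) x - 2 * pd b (Γ j s a) x
        + ∑ c, (Γ j s c x * Tor Γ c a b x - Γ c s a x * Tor Γ j c b x
            - Γ c s b x * Tor Γ j a c x
            - 2 * (Γ c s a x * Γ j b c x) + 2 * (Γ c b a x * Γ j s c x)) := by
  unfold covT Rc
  rw [show Tor Γ j a b = fun y => Γ j a b y - Γ j b a y from rfl,
    pd_sub (diffAt hU (hΓs _ _ _) hx) (diffAt hU (hΓs _ _ _) hx)]
  have hm : (∑ c, (Γ j s c x * Tor Γ c a b x - Γ c s a x * Tor Γ j c b x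
            - Γ c s b x * Tor Γ j a c x
            - 2 * (Γ c s a x * Γ j b c x) + 2 * (Γ c b a x * Γ j s c x)))
      = (∑ c, Γ j s c x * Tor Γ c a b x) - (∑ c, Γ c s a x * Tor Γ j c b x)
        - (∑ c, Γ c s b x * Tor Γ j a c x)
        - 2 * (∑ c, Γ c s a x * Γ j b c x) + 2 * (∑ c, Γ c b a x * Γ j s c x) := by
    rw [Finset.mul_sum, Finset.mul_sum, ← Finset.sum_sub_distrib, ← Finset.sum_sub_distrib,
      ← Finset.sum_sub_distrib, ← Finset.sum_add_distrib]
  linear_combination (-1 : ℝ) * hm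

theorem Hc_eq (hU : IsOpen U) (hΓs : ∀ i j k, ContDiffOn ℝ (⊤ : ℕ∞) (Γ i j k) U)
    {x : Fin n → ℝ} (hx : x ∈ U) (i j m m' : Fin n) :
    Hc ω Γ i j m m' x
      = ∑ s, ω i s x * (pd m' (Γ j s m) x - pd m (Γ j s m') x
          + ∑ c, (Γ c s m x * Γ j c m' x - Γ c s m' x * Γ j c m x)) := by
  unfold Hc
  rw [Finset.mul_sum]
  refine Finset.sum_congr rfl fun s _ => ?_
  rw [CT Γ hU hΓs hx j m' m s, CT Γ hU hΓs hx j m m' s]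
  have hm : (∑ c, (Γ j s c x * Tor Γ c m' m x - Γ c s m' x * Tor Γ j c m x
            - Γ c s m x * Tor Γ j m' c x
            - 2 * (Γ c s m' x * Γ j m c x) + 2 * (Γ c m m' x * Γ j s c x)))
      - (∑ c, (Γ j s c x * Tor Γ c m m' x - Γ c s m x * Tor Γ j c m' x
            - Γ c s m' x * Tor Γ j m c x
            - 2 * (Γ c s m x * Γ j m' c x) + 2 * (Γ c m' m x * Γ j s c x)))
      = 2 * ∑ c, (Γ c s m x * Γ j c m' x - Γ c s m' x * Γ j c m x) := by
    rw [Finset.mul_sum, ← Finset.sum_sub_distrib]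
    refine Finset.sum_congr rfl fun c _ => ?_
    simp only [Tor]; ring
  linear_combination (1/2 : ℝ) * (ω i s x) * hm

theorem RicEq (hU : IsOpen U)
    (hΓs : ∀ i j k, ContDiffOn ℝ (⊤ : ℕ∞) (Γ i j k) U)
    (hanti : ∀ i j, ∀ x ∈ U, ω i j x = - ω j i x)
    (hgsym : ∀ i j, ∀ x ∈ U, g i j x = g j i x)
    (m m' : Fin n) : ∀ x ∈ U,
    Ric g ω Γ m m' x = ∑ a, ∑ b, Wf g ω b a x * Ff Γ a b m m' x := by
  intro x hx
  unfold Ric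
  calc ∑ i, ∑ j, g i j x * Hc ω Γ i j m m' x
      = ∑ i, ∑ j, ∑ s, g i j x * (ω i s x *
          (pd m' (Γ j s m) x - pd m (Γ j s m') x
            + ∑ c, (Γ c s m x * Γ j c m' x - Γ c s m' x * Γ j c m x))) := by
        refine Finset.sum_congr rfl fun i _ => Finset.sum_congr rfl fun j _ => ?_
        rw [Hc_eq ω Γ hU hΓs hx, Finset.mul_sum]
    _ = ∑ j, ∑ s, ∑ i, g i j x * (ω i s x *
          (pd m' (Γ j s m) x - pd m (Γ j s m') x
            + ∑ c, (Γ c s m x * Γ j c m' x - Γ c s m' x * Γ j c m x))) := by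
        rw [Finset.sum_comm]
        exact Finset.sum_congr rfl fun j _ => Finset.sum_comm
    _ = ∑ a, ∑ b, Wf g ω b a x * Ff Γ a b m m' x := by
        refine Finset.sum_congr rfl fun a _ => Finset.sum_congr rfl fun b _ => ?_
        unfold Wf
        rw [Finset.sum_mul]
        refine Finset.sum_congr rfl fun c _ => ?_
        have h1 : ω c b x = - ω b c x := hanti c b x hx
        have h2 : g c a x = g a c x := hgsym c a x hx
        have hF : pd m' (Γ a b m) x - pd m (Γ a b m') x
            + (∑ e, (Γ e b m x * Γ a e m' x - Γ e b m' x * Γ a e m x))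
            = - Ff Γ a b m m' x := by
          unfold Ff
          have hs : (∑ e, (Γ e b m x * Γ a e m' x - Γ e b m' x * Γ a e m x))
              = - ∑ e, (Γ a e m x * Γ e b m' x - Γ a e m' x * Γ e b m x) := by
            rw [← Finset.sum_neg_distrib]
            exact Finset.sum_congr rfl fun e _ => by ring
          linear_combination hs
        linear_combination (g c a x * ω c b x) * hF - (g c a x * Ff Γ a b m m' x) * h1
          + (ω b c x * Ff Γ a b m m' x) * h2

theorem OmegaDeriv (hU : IsOpen U)
    (hωs : ∀ i j, ContDiffOn ℝ (⊤ : ℕ∞) (ω i j) U)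
    (hgs : ∀ i j, ContDiffOn ℝ (⊤ : ℕ∞) (g i j) U)
    (hgsym : ∀ i j, ∀ x ∈ U, g i j x = g j i x)
    (hpc : PoissonCompat U ω Γ)
    (hmetric : ∀ i j p, ∀ x ∈ U,
        pd p (g i j) x = ∑ a, Γ a p i x * g a j x + ∑ a, Γ a p j x * g i a x)
    (hTanti : ∀ i j k, ∀ x ∈ U,
        ∑ a, g i a x * Tor Γ a j k x = - ∑ a, g j a x * Tor Γ a i k x)
    (b a p : Fin n) : ∀ x ∈ U,
    pd p (Wf g ω b a) x
      = ∑ c, (Wf g ω b c x * Γ c a p x - Γ b c p x * Wf g ω c a x) := by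
  intro x hx
  have e1 : pd p (Wf g ω b a) x
      = ∑ c, (ω b c x * pd p (g a c) x + g a c x * pd p (ω b c) x) := by
    unfold Wf
    rw [pd_sum (fun c => (diffAt hU (hωs b c) hx).fun_mul (diffAt hU (hgs a c) hx))]
    exact Finset.sum_congr rfl fun c _ =>
      pd_mul (diffAt hU (hωs b c) hx) (diffAt hU (hgs a c) hx)
  have e3 : ∀ c, pd p (ω b c) x
      = -(∑ d, ω d c x * Γ b d p x) - ∑ d, ω b d x * Γ c d p x := by
    intro c; have := hpc b c p x hx; linarith
  have e4 : pd p (Wf g ω b a) x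
      = (∑ c, ∑ d, ω b c x * (Γ d p a x * g d c x))
        + (∑ c, ∑ d, ω b c x * (Γ d p c x * g a d x))
        - (∑ c, ∑ d, g a c x * (ω d c x * Γ b d p x))
        - (∑ c, ∑ d, g a c x * (ω b d x * Γ c d p x)) := by
    rw [e1]
    rw [show (∑ c, (ω b c x * pd p (g a c) x + g a c x * pd p (ω b c) x))
        = ∑ c, ((∑ d, ω b c x * (Γ d p a x * g d c x))
            + (∑ d, ω b c x * (Γ d p c x * g a d x))
            - (∑ d, g a c x * (ω d c x * Γ b d p x))
            - (∑ d, g a c x * (ω b d x * Γ c d p x))) from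
      Finset.sum_congr rfl fun c _ => by
        rw [hmetric a c p x hx, e3 c]
        simp only [mul_add, mul_neg, mul_sub, Finset.mul_sum]
        ring]
    rw [Finset.sum_sub_distrib, Finset.sum_sub_distrib, Finset.sum_add_distrib]
  have e5 : (∑ c, (Wf g ω b c x * Γ c a p x - Γ b c p x * Wf g ω c a x))
      = (∑ c, ∑ d, ω b d x * g c d x * Γ c a p x)
        - (∑ c, ∑ d, Γ b c p x * (ω c d x * g a d x)) := by
    rw [← Finset.sum_sub_distrib]
    refine Finset.sum_congr rfl fun c _ => ?_
    unfold Wf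
    rw [Finset.sum_mul, Finset.mul_sum]
  have hC : (∑ c, ∑ d, g a c x * (ω d c x * Γ b d p x))
      = (∑ c, ∑ d, Γ b c p x * (ω c d x * g a d x)) := by
    rw [Finset.sum_comm]
    exact Finset.sum_congr rfl fun c _ => Finset.sum_congr rfl fun d _ => by ring
  have hA : (∑ c, ∑ d, ω b c x * (Γ d p a x * g d c x))
        - (∑ c, ∑ d, ω b d x * g c d x * Γ c a p x)
      = ∑ d, (ω b d x * ∑ c, g d c x * Tor Γ c p a x) := by
    rw [show (∑ c, ∑ d, ω b c x * (Γ d p a x * g d c x))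
        = ∑ c, ∑ d, ω b d x * (Γ c p a x * g c d x) from by
      rw [Finset.sum_comm]]
    rw [← Finset.sum_sub_distrib]
    rw [show ∑ d, (ω b d x * ∑ c, g d c x * Tor Γ c p a x)
        = ∑ c, ∑ d, ω b d x * (g d c x * Tor Γ c p a x) from by
      rw [show ∑ d, (ω b d x * ∑ c, g d c x * Tor Γ c p a x)
          = ∑ d, ∑ c, ω b d x * (g d c x * Tor Γ c p a x) from
        Finset.sum_congr rfl fun d _ => Finset.mul_sum _ _ _]
      exact Finset.sum_comm]
    refine Finset.sum_congr rfl fun c _ => ?_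
    rw [← Finset.sum_sub_distrib]
    refine Finset.sum_congr rfl fun d _ => ?_
    rw [show g d c x = g c d x from hgsym d c x hx]
    simp only [Tor]; ring
  have hB : (∑ c, ∑ d, ω b c x * (Γ d p c x * g a d x))
        - (∑ c, ∑ d, g a c x * (ω b d x * Γ c d p x))
      = ∑ c, (ω b c x * ∑ d, g a d x * Tor Γ d p c x) := by
    rw [show (∑ c, ∑ d, g a c x * (ω b d x * Γ c d p x))
        = ∑ c, ∑ d, g a d x * (ω b c x * Γ d c p x) from by
      rw [Finset.sum_comm]]
    rw [← Finset.sum_sub_distrib]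
    refine Finset.sum_congr rfl fun c _ => ?_
    rw [Finset.mul_sum, ← Finset.sum_sub_distrib]
    refine Finset.sum_congr rfl fun d _ => ?_
    simp only [Tor]; ring
  have hT1 : ∀ d : Fin n, (∑ c, g d c x * Tor Γ c p a x)
      = - ∑ c, g p c x * Tor Γ c d a x := fun d => hTanti d p a x hx
  have hT2 : ∀ c : Fin n, (∑ d, g a d x * Tor Γ d p c x)
      = - ∑ d, g p d x * Tor Γ d a c x := fun c => hTanti a p c x hx
  have hfin : (∑ d, (ω b d x * ∑ c, g d c x * Tor Γ c p a x))
      + (∑ c, (ω b c x * ∑ d, g a d x * Tor Γ d p c x)) = 0 := by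
    rw [show (∑ d, (ω b d x * ∑ c, g d c x * Tor Γ c p a x))
        = - ∑ d, (ω b d x * ∑ c, g p c x * Tor Γ c d a x) from by
      rw [← Finset.sum_neg_distrib]
      exact Finset.sum_congr rfl fun d _ => by rw [hT1 d]; ring]
    rw [show (∑ c, (ω b c x * ∑ d, g a d x * Tor Γ d p c x))
        = - ∑ c, (ω b c x * ∑ d, g p d x * Tor Γ d a c x) from by
      rw [← Finset.sum_neg_distrib]
      exact Finset.sum_congr rfl fun c _ => by rw [hT2 c]; ring]
    rw [show (∑ c, (ω b c x * ∑ d, g p d x * Tor Γ d a c x))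
        = - ∑ d, (ω b d x * ∑ c, g p c x * Tor Γ c d a x) from by
      rw [← Finset.sum_neg_distrib]
      refine Finset.sum_congr rfl fun c _ => ?_
      rw [show (∑ d, g p d x * Tor Γ d a c x) = - ∑ d, g p d x * Tor Γ d c a x from by
        rw [← Finset.sum_neg_distrib]
        exact Finset.sum_congr rfl fun d _ => by simp only [Tor]; ring]
      ring]
    ring
  linear_combination e4 - e5 - hC + hA + hB + hfin


/-! ### Matrix forms -/

/-- matrix `Ω` with entries `Ω b a` -/
noncomputable def Wmat (g ω : Fin n → Fin n → (Fin n → ℝ) → ℝ) (x : Fin n → ℝ) :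
    Matrix (Fin n) (Fin n) ℝ := Matrix.of fun b a => Wf g ω b a x

/-- matrix `Γ̃_q` -/
noncomputable def Gmat (Γ : Fin n → Fin n → Fin n → (Fin n → ℝ) → ℝ) (q : Fin n)
    (x : Fin n → ℝ) : Matrix (Fin n) (Fin n) ℝ := Matrix.of fun a b => Γ a b q x

noncomputable def Amat (Γ : Fin n → Fin n → Fin n → (Fin n → ℝ) → ℝ) (q r : Fin n)
    (x : Fin n → ℝ) : Matrix (Fin n) (Fin n) ℝ := Matrix.of fun a b => pd q (Γ a b r) x

noncomputable def Cmat (Γ : Fin n → Fin n → Fin n → (Fin n → ℝ) → ℝ) (q r s : Fin n)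
    (x : Fin n → ℝ) : Matrix (Fin n) (Fin n) ℝ :=
  Matrix.of fun a b => pd q (pd r (Γ a b s)) x

noncomputable def Fmat (Γ : Fin n → Fin n → Fin n → (Fin n → ℝ) → ℝ) (r s : Fin n)
    (x : Fin n → ℝ) : Matrix (Fin n) (Fin n) ℝ := Matrix.of fun a b => Ff Γ a b r s x

theorem Fmat_eq (Γ : Fin n → Fin n → Fin n → (Fin n → ℝ) → ℝ) (r s : Fin n)
    (x : Fin n → ℝ) :
    Fmat Γ r s x = Amat Γ r s x - Amat Γ s r x
      + Gmat Γ r x * Gmat Γ s x - Gmat Γ s x * Gmat Γ r x := by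
  ext a b
  simp only [Fmat, Amat, Gmat, Matrix.sub_apply, Matrix.add_apply, Matrix.mul_apply,
    Matrix.of_apply, Ff]
  rw [Finset.sum_sub_distrib]
  ring

section entry
variable {U : Set (Fin n → ℝ)}
variable (ω g : Fin n → Fin n → (Fin n → ℝ) → ℝ)
variable (Γ : Fin n → Fin n → Fin n → (Fin n → ℝ) → ℝ)

theorem pdW_entry (hU : IsOpen U)
    (hωs : ∀ i j, ContDiffOn ℝ (⊤ : ℕ∞) (ω i j) U)
    (hgs : ∀ i j, ContDiffOn ℝ (⊤ : ℕ∞) (g i j) U)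
    (hgsym : ∀ i j, ∀ x ∈ U, g i j x = g j i x)
    (hpc : PoissonCompat U ω Γ)
    (hmetric : ∀ i j p, ∀ x ∈ U,
        pd p (g i j) x = ∑ a, Γ a p i x * g a j x + ∑ a, Γ a p j x * g i a x)
    (hTanti : ∀ i j k, ∀ x ∈ U,
        ∑ a, g i a x * Tor Γ a j k x = - ∑ a, g j a x * Tor Γ a i k x)
    (b a q : Fin n) {x : Fin n → ℝ} (hx : x ∈ U) :
    pd q (Wf g ω b a) x
      = (Wmat g ω x * Gmat Γ q x - Gmat Γ q x * Wmat g ω x) b a := by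
  rw [OmegaDeriv ω g Γ hU hωs hgs hgsym hpc hmetric hTanti b a q x hx]
  simp only [Wmat, Gmat, Matrix.sub_apply, Matrix.mul_apply, Matrix.of_apply]
  rw [Finset.sum_sub_distrib]

theorem pdF_entry (hU : IsOpen U)
    (hΓs : ∀ i j k, ContDiffOn ℝ (⊤ : ℕ∞) (Γ i j k) U)
    (a b q r s : Fin n) {x : Fin n → ℝ} (hx : x ∈ U) :
    pd q (Ff Γ a b r s) x
      = (Cmat Γ q r s x - Cmat Γ q s r x
          + Amat Γ q r x * Gmat Γ s x + Gmat Γ r x * Amat Γ q s x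
          - Amat Γ q s x * Gmat Γ r x - Gmat Γ s x * Amat Γ q r x) a b := by
  have dG : ∀ i j k : Fin n, DifferentiableAt ℝ (Γ i j k) x :=
    fun i j k => diffAt hU (hΓs i j k) hx
  have dpd : ∀ (t : Fin n) (i j k : Fin n), DifferentiableAt ℝ (pd t (Γ i j k)) x :=
    fun t i j k => diffAt hU (contDiffOn_pd hU (hΓs i j k)) hx
  have step1 : pd q (Ff Γ a b r s) x
      = (pd q (pd r (Γ a b s)) x - pd q (pd s (Γ a b r)) x)
        + ∑ c, (Γ a c r x * pd q (Γ c b s) x + Γ c b s x * pd q (Γ a c r) x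
            - (Γ a c s x * pd q (Γ c b r) x + Γ c b r x * pd q (Γ a c s) x)) := by
    unfold Ff
    rw [pd_add ((dpd r a b s).fun_sub (dpd s a b r))
      (DifferentiableAt.fun_sum (fun c _ =>
        ((dG a c r).fun_mul (dG c b s)).fun_sub ((dG a c s).fun_mul (dG c b r))))]
    rw [pd_sub (dpd r a b s) (dpd s a b r)]
    rw [pd_sum (fun c => ((dG a c r).fun_mul (dG c b s)).fun_sub ((dG a c s).fun_mul (dG c b r)))]
    congr 1
    refine Finset.sum_congr rfl fun c _ => ?_
    rw [pd_sub ((dG a c r).fun_mul (dG c b s)) ((dG a c s).fun_mul (dG c b r)),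
      pd_mul (dG a c r) (dG c b s), pd_mul (dG a c s) (dG c b r)]
  rw [step1]
  simp only [Cmat, Amat, Gmat, Matrix.sub_apply, Matrix.add_apply, Matrix.mul_apply,
    Matrix.of_apply]
  have hm : ∑ c, (Γ a c r x * pd q (Γ c b s) x + Γ c b s x * pd q (Γ a c r) x
        - (Γ a c s x * pd q (Γ c b r) x + Γ c b r x * pd q (Γ a c s) x))
      = (∑ c, pd q (Γ a c r) x * Γ c b s x) + (∑ c, Γ a c r x * pd q (Γ c b s) x)
        - (∑ c, pd q (Γ a c s) x * Γ c b r x) - (∑ c, Γ a c s x * pd q (Γ c b r) x) := by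
    rw [← Finset.sum_add_distrib, ← Finset.sum_sub_distrib, ← Finset.sum_sub_distrib]
    exact Finset.sum_congr rfl fun c _ => by ring
  linear_combination hm

end entry

end main

/-! ### Main theorem -/

/-- under Poisson-compatibility, metric-compatibility of `∇` and total
antisymmetry of the lowered torsion, the generalised Ricci 2-form `ℛ = g_{ij} H^{ij}`
is closed: the cyclic sum of `∂_p ℛ_{mn}` vanishes. -/
theorem statement_14 (U : Set (Fin n → ℝ)) (hU : IsOpen U)
    (ω g : Fin n → Fin n → (Fin n → ℝ) → ℝ)
    (Γ : Fin n → Fin n → Fin n → (Fin n → ℝ) → ℝ)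
    (hωs : ∀ i j, ContDiffOn ℝ (⊤ : ℕ∞) (ω i j) U)
    (hgs : ∀ i j, ContDiffOn ℝ (⊤ : ℕ∞) (g i j) U)
    (hΓs : ∀ i j k, ContDiffOn ℝ (⊤ : ℕ∞) (Γ i j k) U)
    (hanti : ∀ i j, ∀ x ∈ U, ω i j x = - ω j i x)
    (hgsym : ∀ i j, ∀ x ∈ U, g i j x = g j i x)
    (hpc : PoissonCompat U ω Γ)
    (hmetric : ∀ i j p, ∀ x ∈ U,
        pd p (g i j) x = ∑ a, Γ a p i x * g a j x + ∑ a, Γ a p j x * g i a x)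
    (hTanti : ∀ i j k, ∀ x ∈ U,
        ∑ a, g i a x * Tor Γ a j k x = - ∑ a, g j a x * Tor Γ a i k x) :
    ∀ p m m' : Fin n, ∀ x ∈ U,
      pd p (Ric g ω Γ m m') x + pd m (Ric g ω Γ m' p) x + pd m' (Ric g ω Γ p m) x = 0 := by
  intro p m m' x hx
  have dW : ∀ b a : Fin n, DifferentiableAt ℝ (Wf g ω b a) x := fun b a =>
    DifferentiableAt.fun_sum fun c _ =>
      (diffAt hU (hωs b c) hx).mul (diffAt hU (hgs a c) hx)
  have dF : ∀ a b r s : Fin n, DifferentiableAt ℝ (Ff Γ a b r s) x := fun a b r s =>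
    (((diffAt hU (contDiffOn_pd hU (hΓs a b s)) hx).sub
        (diffAt hU (contDiffOn_pd hU (hΓs a b r)) hx)).add
      (DifferentiableAt.fun_sum fun c _ =>
        ((diffAt hU (hΓs a c r) hx).mul (diffAt hU (hΓs c b s) hx)).sub
          ((diffAt hU (hΓs a c s) hx).mul (diffAt hU (hΓs c b r) hx))))
  have key : ∀ q r s : Fin n,
      pd q (Ric g ω Γ r s) x
        = Matrix.trace ((Wmat g ω x * Gmat Γ q x - Gmat Γ q x * Wmat g ω x) * Fmat Γ r s x)
          + Matrix.trace (Wmat g ω x *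
            (Cmat Γ q r s x - Cmat Γ q s r x
              + Amat Γ q r x * Gmat Γ s x + Gmat Γ r x * Amat Γ q s x
              - Amat Γ q s x * Gmat Γ r x - Gmat Γ s x * Amat Γ q r x)) := by
    intro q r s
    have hev : Ric g ω Γ r s =ᶠ[nhds x] fun y => ∑ a, ∑ b, Wf g ω b a y * Ff Γ a b r s y :=
      Filter.eventuallyEq_of_mem (hU.mem_nhds hx)
        (fun y hy => RicEq ω g Γ hU hΓs hanti hgsym r s y hy)
    have h1 : (∑ a, ∑ b, Wf g ω b a x * pd q (Ff Γ a b r s) x)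
        = Matrix.trace (Wmat g ω x *
            (Cmat Γ q r s x - Cmat Γ q s r x
              + Amat Γ q r x * Gmat Γ s x + Gmat Γ r x * Amat Γ q s x
              - Amat Γ q s x * Gmat Γ r x - Gmat Γ s x * Amat Γ q r x)) := by
      rw [← trace_ab]
      exact Finset.sum_congr rfl fun a _ => Finset.sum_congr rfl fun b _ => by
        rw [pdF_entry Γ hU hΓs a b q r s hx]; rfl
    have h2 : (∑ a, ∑ b, Ff Γ a b r s x * pd q (Wf g ω b a) x)
        = Matrix.trace ((Wmat g ω x * Gmat Γ q x - Gmat Γ q x * Wmat g ω x)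
            * Fmat Γ r s x) := by
      rw [← trace_ab]
      exact Finset.sum_congr rfl fun a _ => Finset.sum_congr rfl fun b _ => by
        rw [pdW_entry ω g Γ hU hωs hgs hgsym hpc hmetric hTanti b a q hx]
        exact mul_comm _ _
    calc pd q (Ric g ω Γ r s) x
        = ∑ a, ∑ b, (Wf g ω b a x * pd q (Ff Γ a b r s) x
            + Ff Γ a b r s x * pd q (Wf g ω b a) x) := by
          rw [pd_congr hev,
            pd_sum (fun a => DifferentiableAt.fun_sum fun b _ => (dW b a).fun_mul (dF a b r s))]
          refine Finset.sum_congr rfl fun a _ => ?_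
          rw [pd_sum (fun b => (dW b a).fun_mul (dF a b r s))]
          exact Finset.sum_congr rfl fun b _ => pd_mul (dW b a) (dF a b r s)
      _ = (∑ a, ∑ b, Wf g ω b a x * pd q (Ff Γ a b r s) x)
          + (∑ a, ∑ b, Ff Γ a b r s x * pd q (Wf g ω b a) x) := by
          rw [← Finset.sum_add_distrib]
          exact Finset.sum_congr rfl fun a _ => Finset.sum_add_distrib
      _ = _ := by rw [h1, h2]; ring
  -- Schwarz symmetries
  have hSchw1 : Cmat Γ p m m' x = Cmat Γ m p m' x := by
    ext a b; exact pd_comm hU (hΓs a b m') hx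
  have hSchw2 : Cmat Γ p m' m x = Cmat Γ m' p m x := by
    ext a b; exact pd_comm hU (hΓs a b m) hx
  have hSchw3 : Cmat Γ m m' p x = Cmat Γ m' m p x := by
    ext a b; exact pd_comm hU (hΓs a b p) hx
  have hbi := bianchi (Gmat Γ p x) (Gmat Γ m x) (Gmat Γ m' x)
    (Amat Γ p m x) (Amat Γ p m' x) (Amat Γ m m' x) (Amat Γ m' m x)
    (Amat Γ m' p x) (Amat Γ m p x)
    (Cmat Γ p m m' x) (Cmat Γ p m' m x) (Cmat Γ m m' p x) (Cmat Γ m p m' x)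
    (Cmat Γ m' p m x) (Cmat Γ m' m p x) hSchw1 hSchw2 hSchw3
  rw [← Fmat_eq Γ m m' x, ← Fmat_eq Γ m' p x, ← Fmat_eq Γ p m x] at hbi
  have htr : Matrix.trace (Wmat g ω x *
        (Cmat Γ p m m' x - Cmat Γ p m' m x
          + Amat Γ p m x * Gmat Γ m' x + Gmat Γ m x * Amat Γ p m' x
          - Amat Γ p m' x * Gmat Γ m x - Gmat Γ m' x * Amat Γ p m x))
      + Matrix.trace (Wmat g ω x *
        (Cmat Γ m m' p x - Cmat Γ m p m' x
          + Amat Γ m m' x * Gmat Γ p x + Gmat Γ m' x * Amat Γ m p x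
          - Amat Γ m p x * Gmat Γ m' x - Gmat Γ p x * Amat Γ m m' x))
      + Matrix.trace (Wmat g ω x *
        (Cmat Γ m' p m x - Cmat Γ m' m p x
          + Amat Γ m' p x * Gmat Γ m x + Gmat Γ p x * Amat Γ m' m x
          - Amat Γ m' m x * Gmat Γ p x - Gmat Γ m x * Amat Γ m' p x))
      = -(Matrix.trace (Wmat g ω x *
            (Gmat Γ p x * Fmat Γ m m' x - Fmat Γ m m' x * Gmat Γ p x))
          + Matrix.trace (Wmat g ω x *
            (Gmat Γ m x * Fmat Γ m' p x - Fmat Γ m' p x * Gmat Γ m x))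
          + Matrix.trace (Wmat g ω x *
            (Gmat Γ m' x * Fmat Γ p m x - Fmat Γ p m x * Gmat Γ m' x))) := by
    rw [← Matrix.trace_add, ← Matrix.trace_add, ← Matrix.mul_add, ← Matrix.mul_add, hbi]
    simp only [Matrix.mul_neg, Matrix.mul_add, Matrix.trace_neg, Matrix.trace_add]
  rw [key p m m', key m m' p, key m' p m]
  linear_combination htr
    + comm_trace (Wmat g ω x) (Gmat Γ p x) (Fmat Γ m m' x)
    + comm_trace (Wmat g ω x) (Gmat Γ m x) (Fmat Γ m' p x)
    + comm_trace (Wmat g ω x) (Gmat Γ m' x) (Fmat Γ p m x)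


end Stmt14
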